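/- For every positive integer n, if δ(n) ≠ 0 then δ(n) ≥ δ(2) = 2 − 3·log₃(2). Equivalently, if n is not of the form 3^k with k ≥ 1, then δ(n) ≥ 2 − 3·log₃(2). -/

import Mathlib

open Real

/-- `Writes n k` means the positive integer `n` can be written using exactly `k` ones
combined by additions and multiplications. -/
inductive Writes : ℕ → ℕ → Prop
  | one : Writes 1 1
  | add {a b m n : ℕ} : Writes a m → Writes b n → Writes (a + b) (m + n)
  | mul {a b m n : ℕ} : Writes a m → Writes b n → Writes (a * b) (m + n)

/-- The integer complexity `‖n‖`: the least number of 1's needed to write `n`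
using additions and multiplications. -/
noncomputable def cpx (n : ℕ) : ℕ := sInf {k | Writes n k}

/-- The defect `δ(n) = ‖n‖ - 3 log₃ n`. -/
noncomputable def defect (n : ℕ) : ℝ := (cpx n : ℝ) - 3 * Real.logb 3 n

/-!
A number written with `k` ones is at most `E k`, the value of the best expression
(`3^j`, `4·3^(j-1)`, `2·3^j` for `k = 3j, 3j+1, 3j+2`), and `E k ^ 3 ≤ 3 ^ k`; this gives
`δ(3 ^ j) = 0` for `j ≥ 1`. For a number `n` that is not such a power of 3
the same induction on expressions gives the sharper bound `3 n ≤ 2 E (k + 1)` (for `k ≥ 4`,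
`2 E (k + 1) / 3 = 2 E (k - 2)` is the value of the best expression `(1 + 1) · x`), i.e.
`9 n ^ 3 ≤ 8 · 3 ^ k`, which is `δ(n) ≥ 2 - 3 log₃ 2 = δ(2)` after taking logarithms.
-/

def E : ℕ → ℕ
  | 0 => 0 | 1 => 1 | 2 => 2 | 3 => 3 | 4 => 4
  | k + 5 => 3 * E (k + 2)

lemma E_add_three {k : ℕ} (hk : 2 ≤ k) : E (k + 3) = 3 * E k := by
  obtain ⟨j, rfl⟩ : ∃ j, k = j + 2 := ⟨k - 2, by omega⟩
  rfl

lemma three_mul_E_le (k : ℕ) : 3 * E k ≤ E (k + 3) := by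
  rcases lt_or_ge k 2 with hk | hk
  · interval_cases k <;> decide
  · rw [E_add_three hk]

lemma E_lt_E_succ (k : ℕ) : E k < E (k + 1) := by
  rcases lt_or_ge k 5 with hk | hk
  · interval_cases k <;> decide
  · obtain ⟨j, rfl⟩ : ∃ j, k = j + 3 := ⟨k - 3, by omega⟩
    have := E_lt_E_succ j
    rw [E_add_three (by omega), show j + 3 + 1 = j + 1 + 3 by omega, E_add_three (by omega)]
    omega

lemma E_strictMono : StrictMono E := strictMono_nat_of_lt_succ E_lt_E_succ

lemma E_mul_le (m n : ℕ) : E m * E n ≤ E (m + n) := by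
  have step (a b : ℕ) (hb : 2 ≤ b) (h : E a * E b ≤ E (a + b)) :
      E a * E (b + 3) ≤ E (a + (b + 3)) :=
    calc E a * E (b + 3) = 3 * (E a * E b) := by rw [E_add_three hb]; ring
      _ ≤ 3 * E (a + b) := Nat.mul_le_mul_left 3 h
      _ ≤ E (a + (b + 3)) := add_assoc a b 3 ▸ three_mul_E_le (a + b)
  rcases le_or_gt 5 n with hn | hn
  · obtain ⟨j, rfl⟩ : ∃ j, n = j + 3 := ⟨n - 3, by omega⟩
    exact step m j (by omega) (E_mul_le m j)
  rcases le_or_gt 5 m with hm | hm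
  · obtain ⟨j, rfl⟩ : ∃ j, m = j + 3 := ⟨m - 3, by omega⟩
    rw [mul_comm, add_comm (j + 3) n]
    exact step n j (by omega) (by rw [mul_comm, add_comm]; exact E_mul_le j n)
  interval_cases m <;> interval_cases n <;> decide
termination_by m + n

lemma E_add_le (m n : ℕ) : E m + E n ≤ E (m + n) := by
  rcases (by omega : m ≤ 1 ∨ n ≤ 1 ∨ 2 ≤ m ∧ 2 ≤ n) with hm | hn | ⟨hm, hn⟩
  · have := E_strictMono.add_le_nat m n
    interval_cases m <;> simp_all [E]
  · have := E_strictMono.add_le_nat n m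
    interval_cases n <;> simp_all [E, add_comm]
  · have hEm := hm.trans (E_strictMono.id_le m)
    have hEn := hn.trans (E_strictMono.id_le n)
    nlinarith [E_mul_le m n]

lemma three_mul_E_add_E_le {m n : ℕ} (hm : 1 ≤ m) (hn : 1 ≤ n) (h3 : m + n ≠ 3) :
    3 * (E m + E n) ≤ 2 * E (m + n + 1) := by
  wlog hmn : m ≤ n generalizing m n
  · rw [add_comm (E m), add_comm m]
    exact this hn hm (by omega) (by omega)
  rcases (by omega : m = 1 ∧ n = 1 ∨ m = 1 ∧ 3 ≤ n ∨ 2 ≤ m)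
    with ⟨rfl, rfl⟩ | ⟨rfl, hn⟩ | hm
  · decide
  · have hEn := hn.trans (E_strictMono.id_le n)
    have := E_mul_le 2 n
    rw [show 1 + n + 1 = 2 + n by omega]
    simp only [E] at this ⊢
    omega
  · have hEm := hm.trans (E_strictMono.id_le m)
    have hEn := (hm.trans hmn).trans (E_strictMono.id_le n)
    have := E_mul_le (m + 1) n
    rw [show m + 1 + n = m + n + 1 by omega] at this
    nlinarith [E_lt_E_succ m]

lemma E_pow_three_le (k : ℕ) : E k ^ 3 ≤ 3 ^ k := by
  rcases lt_or_ge k 5 with hk | hk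
  · interval_cases k <;> decide
  · obtain ⟨j, rfl⟩ : ∃ j, k = j + 3 := ⟨k - 3, by omega⟩
    have := E_pow_three_le j
    rw [E_add_three (by omega), mul_pow, pow_add]
    omega

def IsPosPowOfThree (n : ℕ) : Prop := ∃ k, 1 ≤ k ∧ n = 3 ^ k

lemma IsPosPowOfThree.mul {a b : ℕ} (ha : IsPosPowOfThree a) (hb : IsPosPowOfThree b) :
    IsPosPowOfThree (a * b) := by
  obtain ⟨i, hi, rfl⟩ := ha
  obtain ⟨j, -, rfl⟩ := hb
  exact ⟨i + j, by omega, (pow_add 3 i j).symm⟩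

namespace Writes

variable {n k : ℕ}

lemma ones_pos (h : Writes n k) : 0 < k := by
  induction h <;> omega

lemma le_E (h : Writes n k) : n ≤ E k := by
  induction h with
  | one => decide
  | @add a b m m' _ _ iha ihb => exact (Nat.add_le_add iha ihb).trans (E_add_le m m')
  | @mul a b m m' _ _ iha ihb => exact (Nat.mul_le_mul iha ihb).trans (E_mul_le m m')

lemma three_mul_le_two_mul_E_succ (h : Writes n k) (hn : ¬IsPosPowOfThree n) :
    3 * n ≤ 2 * E (k + 1) := by
  induction h with
  | one => decide
  | @add a b m m' ha hb _ _ =>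
    have hEa := ha.le_E
    have hEb := hb.le_E
    by_cases h3 : m + m' = 3
    · have hab : a + b ≠ 3 := fun h => hn ⟨1, le_rfl, h⟩
      have hE : E m + E m' = 3 := by
        obtain ⟨rfl, rfl⟩ | ⟨rfl, rfl⟩ : m = 1 ∧ m' = 2 ∨ m = 2 ∧ m' = 1 := by
          have := ha.ones_pos; have := hb.ones_pos; omega
        all_goals rfl
      rw [h3, show E (3 + 1) = 4 from rfl]
      omega
    · have := three_mul_E_add_E_le ha.ones_pos hb.ones_pos h3
      omega
  | @mul a b m m' ha hb iha ihb =>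
    have key {x y p q : ℕ} (hx : 3 * x ≤ 2 * E (p + 1)) (hy : y ≤ E q) :
        3 * (x * y) ≤ 2 * E (p + q + 1) :=
      calc 3 * (x * y) = 3 * x * y := (mul_assoc 3 x y).symm
        _ ≤ 2 * (E (p + 1) * E q) := by rw [← mul_assoc]; exact Nat.mul_le_mul hx hy
        _ ≤ 2 * E (p + q + 1) := by
          rw [add_right_comm]; exact Nat.mul_le_mul_left 2 (E_mul_le _ _)
    rcases not_and_or.mp fun h : IsPosPowOfThree a ∧ IsPosPowOfThree b => hn (h.1.mul h.2)
      with hna | hnb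
    · exact key (iha hna) hb.le_E
    · rw [mul_comm a, add_comm m]
      exact key (ihb hnb) ha.le_E

lemma pow_three_le (h : Writes n k) : n ^ 3 ≤ 3 ^ k :=
  (Nat.pow_le_pow_left h.le_E 3).trans (E_pow_three_le k)

lemma nine_mul_pow_three_le (h : Writes n k) (hn : ¬IsPosPowOfThree n) :
    9 * n ^ 3 ≤ 8 * 3 ^ k := by
  have h3 := Nat.pow_le_pow_left (h.three_mul_le_two_mul_E_succ hn) 3
  have hE := E_pow_three_le (k + 1)
  rw [mul_pow, mul_pow] at h3
  rw [pow_succ 3 k] at hE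
  norm_num at h3
  omega

lemma self (hn : 0 < n) : Writes n n := by
  induction n with
  | zero => omega
  | succ n ih =>
    rcases Nat.eq_zero_or_pos n with rfl | hn
    · exact one
    · exact add (ih hn) one

lemma pow {a m : ℕ} (h : Writes a m) {j : ℕ} (hj : 0 < j) : Writes (a ^ j) (m * j) := by
  induction j, hj using Nat.le_induction with
  | base => simpa using h
  | succ j _ ih => simpa [pow_succ, mul_add] using ih.mul h

lemma cpx_le (h : Writes n k) : cpx n ≤ k := Nat.sInf_le h

end Writes

lemma writes_cpx {n : ℕ} (hn : 0 < n) : Writes n (cpx n) := Nat.sInf_mem ⟨n, Writes.self hn⟩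

lemma cpx_three_pow {j : ℕ} (hj : 0 < j) : cpx (3 ^ j) = 3 * j := by
  refine le_antisymm ((Writes.self (by norm_num)).pow hj).cpx_le ?_
  have := (writes_cpx (n := 3 ^ j) (by positivity)).pow_three_le
  rw [← pow_mul, mul_comm] at this
  exact (Nat.pow_le_pow_iff_right (by norm_num)).1 this

lemma cpx_two : cpx 2 = 2 := by
  refine le_antisymm (Writes.self (by norm_num)).cpx_le ?_
  have := (writes_cpx (n := 2) (by norm_num)).pow_three_le
  by_contra! h
  interval_cases cpx 2 <;> simp_all

lemma defect_three_pow {j : ℕ} (hj : 0 < j) : defect (3 ^ j) = 0 := by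
  simp [defect, cpx_three_pow hj, logb_pow, logb_self_eq_one]

lemma defect_two : defect 2 = 2 - 3 * logb 3 2 := by
  simp [defect, cpx_two]

lemma le_defect_of_not_isPosPowOfThree {n : ℕ} (hn : 0 < n) (hp : ¬IsPosPowOfThree n) :
    2 - 3 * logb 3 2 ≤ defect n := by
  have key : ((3 : ℝ) ^ 2 * n ^ 3) ≤ 2 ^ 3 * 3 ^ cpx n := by
    exact_mod_cast (by simpa using (writes_cpx hn).nine_mul_pow_three_le hp)
  have := logb_le_logb_of_le (b := 3) (by norm_num) (by positivity) key
  rw [logb_mul (by positivity) (by positivity), logb_mul (by positivity) (by positivity),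
    logb_pow, logb_pow, logb_pow, logb_pow, logb_self_eq_one (by norm_num)] at this
  push_cast at this
  unfold defect
  linarith

/-- If δ(n) ≠ 0 then δ(n) ≥ δ(2) = 2 − 3·log₃ 2; equivalently, if n is not a power
3^k with k ≥ 1 then δ(n) ≥ 2 − 3·log₃ 2. -/
theorem defect_gap (n : ℕ) (hn : 0 < n) :
    defect 2 = 2 - 3 * Real.logb 3 2 ∧
    (defect n ≠ 0 → 2 - 3 * Real.logb 3 2 ≤ defect n) ∧
    (¬ (∃ k : ℕ, 1 ≤ k ∧ n = 3 ^ k) → 2 - 3 * Real.logb 3 2 ≤ defect n) := by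
  refine ⟨defect_two, fun hne => le_defect_of_not_isPosPowOfThree hn ?_,
    le_defect_of_not_isPosPowOfThree hn⟩
  rintro ⟨j, hj, rfl⟩
  exact hne (defect_three_pow hj)
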